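/- Let (X,d) be a proper geodesic δ-hyperbolic metric space, f : X → X a non-expanding map, η ∈ ∂_G X a boundary regular fixed point of f, and γ : [0,+∞) → X a geodesic ray with endpoint η. Then there exists T ≥ 0 such that the curve f∘γ restricted to [T,+∞) is a (1, 4δ+2)-quasi-geodesic with endpoint η. -/
import Mathlib


/- Preliminary definitions: Gromov hyperbolicity, Gromov boundary (via geodesic rays),
   dilations, boundary regular fixed points, horofunctions, backward orbits. -/

noncomputable section

open Filter Topology Metric Set

/-- The Gromov product of `x` and `y` with respect to the base point `p`. -/
def gromovProd {X : Type*} [MetricSpace X] (p x y : X) : ℝ :=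
  (dist p x + dist p y - dist x y) / 2

/-- A (unit speed) geodesic ray, parametrized by `t ≥ 0`. -/
def IsGeodesicRay {X : Type*} [MetricSpace X] (γ : ℝ → X) : Prop :=
  ∀ s t : ℝ, 0 ≤ s → 0 ≤ t → dist (γ s) (γ t) = |s - t|

/-- A (unit speed) geodesic segment from `x` to `y`, parametrized on `[0, dist x y]`. -/
def IsGeodesicFromTo {X : Type*} [MetricSpace X] (γ : ℝ → X) (x y : X) : Prop :=
  γ 0 = x ∧ γ (dist x y) = y ∧
    ∀ s t : ℝ, s ∈ Set.Icc 0 (dist x y) → t ∈ Set.Icc 0 (dist x y) →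
      dist (γ s) (γ t) = |s - t|

/-- A geodesic metric space: any two points are joined by a geodesic. -/
def IsGeodesicSpace (X : Type*) [MetricSpace X] : Prop :=
  ∀ x y : X, ∃ γ : ℝ → X, IsGeodesicFromTo γ x y

/-- `δ`-hyperbolicity via slim triangles: every side of every geodesic triangle is contained
in the `δ`-neighborhood of the union of the other two sides. -/
def IsDeltaHyperbolic (X : Type*) [MetricSpace X] (δ : ℝ) : Prop :=
  ∀ x y z : X, ∀ α β γ : ℝ → X,
    IsGeodesicFromTo α x y → IsGeodesicFromTo β y z → IsGeodesicFromTo γ x z →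
    ∀ t ∈ Set.Icc (0 : ℝ) (dist x z),
      ∃ u ∈ α '' Set.Icc 0 (dist x y) ∪ β '' Set.Icc 0 (dist y z), dist (γ t) u ≤ δ

/-- A Gromov hyperbolic space: `δ`-hyperbolic for some `δ ≥ 0`. -/
def GromovHyperbolic (X : Type*) [MetricSpace X] : Prop :=
  ∃ δ : ℝ, 0 ≤ δ ∧ IsDeltaHyperbolic X δ

/-- The trace on `X` of the filter of neighborhoods, in the Gromov compactification, of the
boundary point determined by the geodesic ray `γ`: a sequence (or a function) converges to
the boundary point `[γ]` iff its Gromov products with points far along `γ` tend to `+∞`. -/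
def gromovFilter {X : Type*} [MetricSpace X] (γ : ℝ → X) : Filter X :=
  ⨅ M : ℝ, Filter.principal
    {x | M ≤ Filter.liminf (fun t : ℝ => gromovProd (γ 0) x (γ t)) Filter.atTop}

/-- Two geodesic rays are asymptotic, i.e. they determine the same point of the
Gromov boundary. -/
def AsympRays {X : Type*} [MetricSpace X] (γ σ : ℝ → X) : Prop :=
  ∃ C : ℝ, ∀ t : ℝ, 0 ≤ t → dist (γ t) (σ t) ≤ C

/-- A non-expanding (1-Lipschitz) map. -/
def Nonexpanding {X : Type*} [MetricSpace X] (f : X → X) : Prop :=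
  ∀ x y : X, dist (f x) (f y) ≤ dist x y

/-- Membership in the geodesic region `A(σ, R)` with vertex `[σ]`. -/
def InGeodesicRegion {X : Type*} [MetricSpace X] (σ : ℝ → X) (R : ℝ) (x : X) : Prop :=
  ∃ t : ℝ, 0 ≤ t ∧ dist x (σ t) < R

/-- `f` has geodesic limit `[ξ]` at the boundary point `[γ]`: for every sequence converging
to `[γ]` inside a geodesic region with vertex `[γ]`, the image sequence converges to `[ξ]`. -/
def HasGeodesicLimitAt {X : Type*} [MetricSpace X] (f : X → X) (γ ξ : ℝ → X) : Prop :=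
  ∀ σ : ℝ → X, IsGeodesicRay σ → AsympRays γ σ → ∀ R : ℝ, 0 < R →
    ∀ x : ℕ → X, (∀ n, InGeodesicRegion σ R (x n)) →
      Filter.Tendsto x Filter.atTop (gromovFilter γ) →
      Filter.Tendsto (fun n => f (x n)) Filter.atTop (gromovFilter ξ)

/-- `log λ_{η,p}(f)`, the logarithm of the dilation of `f` at the boundary point `η = [γ]`
with respect to the base point `p`, as an extended real number:
`log λ_{η,p}(f) = liminf_{x → η} (d(x,p) - d(f(x),p))`. -/
def logDilation {X : Type*} [MetricSpace X] (p : X) (γ : ℝ → X) (f : X → X) : EReal :=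
  Filter.liminf (fun x => ((dist x p - dist (f x) p : ℝ) : EReal)) (gromovFilter γ)

/-- The dilation of `f` at `[γ]` w.r.t. `p` is finite with logarithm the real number `L`. -/
def HasLogDilation {X : Type*} [MetricSpace X] (p : X) (γ : ℝ → X) (f : X → X) (L : ℝ) : Prop :=
  logDilation p γ f = (L : EReal)

/-- The point `[γ]` of the Gromov boundary is a boundary regular fixed point (BRFP) of `f`:
the dilation at `[γ]` is finite and `f` has geodesic limit `[γ]` at `[γ]`. -/
def IsBRFP {X : Type*} [MetricSpace X] (f : X → X) (γ : ℝ → X) : Prop :=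
  IsGeodesicRay γ ∧ logDilation (γ 0) γ f ≠ ⊤ ∧ HasGeodesicLimitAt f γ γ

/-- The stable dilation of `f` at the BRFP `[γ]` has logarithm `L`:
`log Λ_η = lim_n (1/n) log λ_{η,p}(f^n)`. -/
def HasStableLogDilation {X : Type*} [MetricSpace X] (p : X) (γ : ℝ → X) (f : X → X)
    (L : ℝ) : Prop :=
  ∃ l : ℕ → ℝ, (∀ n : ℕ, 1 ≤ n → HasLogDilation p γ (f^[n]) (l n)) ∧
    Filter.Tendsto (fun n : ℕ => l n / n) Filter.atTop (nhds L)

/-- A backward orbit of `f`. -/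
def IsBackwardOrbit {X : Type*} (f : X → X) (x : ℕ → X) : Prop :=
  ∀ n : ℕ, f (x (n + 1)) = x n

/-- A sequence has bounded step. -/
def BoundedStep {X : Type*} [MetricSpace X] (x : ℕ → X) : Prop :=
  ∃ S : ℝ, ∀ n : ℕ, dist (x n) (x (n + 1)) ≤ S

/-- The backward step rate of a backward orbit with bounded step equals `b`:
`σ_m = lim_n d(x_{n+m}, x_n)` exists for each `m`, and `b = lim_m σ_m / m`. -/
def HasBackwardStepRate {X : Type*} [MetricSpace X] (x : ℕ → X) (b : ℝ) : Prop :=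
  ∃ σ : ℕ → ℝ,
    (∀ m : ℕ, Filter.Tendsto (fun n : ℕ => dist (x (n + m)) (x n)) Filter.atTop (nhds (σ m))) ∧
    Filter.Tendsto (fun m : ℕ => σ m / m) Filter.atTop (nhds b)

/-- `f` is elliptic: some (equivalently, every) forward orbit is bounded. -/
def IsElliptic {X : Type*} [MetricSpace X] (f : X → X) : Prop :=
  ∃ x : X, Bornology.IsBounded (Set.range fun n : ℕ => f^[n] x)

/-- The limit retract `ω_f`: the union of all ω-limit sets of forward orbits of `f`. -/
def limitRetract {X : Type*} [MetricSpace X] (f : X → X) : Set X :=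
  ⋃ x : X,
    {y | ∃ φ : ℕ → ℕ, StrictMono φ ∧ Filter.Tendsto (fun k => f^[φ k] x) Filter.atTop (nhds y)}

/-- `f` is weakly elliptic: elliptic with non-compact limit retract. -/
def WeaklyElliptic {X : Type*} [MetricSpace X] (f : X → X) : Prop :=
  IsElliptic f ∧ ¬ IsCompact (limitRetract f)

/-- The divergence rate (translation length) of `f` equals `c`:
`c(f) = lim_n d(x, f^n(x))/n` for every `x`. -/
def HasDivergenceRate {X : Type*} [MetricSpace X] (f : X → X) (c : ℝ) : Prop :=
  ∀ x : X, Filter.Tendsto (fun n : ℕ => dist x (f^[n] x) / n) Filter.atTop (nhds c)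

/-- `[γ]` is the Denjoy–Wolff point of `f`: every forward orbit converges to `[γ]`. -/
def IsDenjoyWolffPt {X : Type*} [MetricSpace X] (f : X → X) (γ : ℝ → X) : Prop :=
  IsGeodesicRay γ ∧
    ∀ x : X, Filter.Tendsto (fun n : ℕ => f^[n] x) Filter.atTop (gromovFilter γ)

/-- `h = h_{a,p}` is a horofunction normalized at `p` (`h(p) = 0`): a limit, along an escaping
sequence `w`, of the functions `y ↦ d(w_n, y) - d(w_n, p)`. -/
def IsHorofunctionAt {X : Type*} [MetricSpace X] (p : X) (h : X → ℝ) : Prop :=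
  h p = 0 ∧ ∃ w : ℕ → X, Filter.Tendsto (fun n => dist p (w n)) Filter.atTop Filter.atTop ∧
    ∀ y : X, Filter.Tendsto (fun n => dist (w n) y - dist (w n) p) Filter.atTop (nhds (h y))

/-- The horofunction class of `h` (a point `a ∈ ∂_H X`) projects under the canonical map
`Φ : X̄^H → X̄^G` to the Gromov boundary point `[γ]`, i.e. `a ∈ Φ⁻¹([γ])`. -/
def HoroProjectsTo {X : Type*} [MetricSpace X] (p : X) (h : X → ℝ) (γ : ℝ → X) : Prop :=
  ∃ w : ℕ → X, Filter.Tendsto (fun n => dist p (w n)) Filter.atTop Filter.atTop ∧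
    (∀ y : X, Filter.Tendsto (fun n => dist (w n) y - dist (w n) p) Filter.atTop (nhds (h y))) ∧
    Filter.Tendsto w Filter.atTop (gromovFilter γ)

/-- The horofunction compactification is equivalent to the Gromov compactification:
the canonical continuous map `Φ : X̄^H → X̄^G` is injective (hence a homeomorphism). -/
def CompactificationsEquivalent (X : Type*) [MetricSpace X] : Prop :=
  ∀ (p : X) (h₁ h₂ : X → ℝ), IsHorofunctionAt p h₁ → IsHorofunctionAt p h₂ →
    (∃ γ : ℝ → X, IsGeodesicRay γ ∧ HoroProjectsTo p h₁ γ ∧ HoroProjectsTo p h₂ γ) → h₁ = h₂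

/-- An escaping sequence: it eventually leaves every compact subset. -/
def Escaping {X : Type*} [TopologicalSpace X] (x : ℕ → X) : Prop :=
  ∀ K : Set X, IsCompact K → ∀ᶠ n in Filter.atTop, x n ∉ K

/-- A discrete quasi-geodesic. -/
def DiscreteQuasiGeodesic {X : Type*} [MetricSpace X] (x : ℕ → X) : Prop :=
  ∃ A B : ℝ, 1 ≤ A ∧ 0 ≤ B ∧ ∀ n m : ℕ,
    A⁻¹ * |(n : ℝ) - (m : ℝ)| - B ≤ dist (x n) (x m) ∧
      dist (x n) (x m) ≤ A * |(n : ℝ) - (m : ℝ)| + B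

/-- An almost geodesic curve. -/
def IsAlmostGeodesic {X : Type*} [MetricSpace X] (α : ℝ → X) : Prop :=
  ∀ ε : ℝ, 0 < ε → ∃ T : ℝ, 0 ≤ T ∧ ∀ t₁ t₂ : ℝ, T ≤ t₁ → T ≤ t₂ →
    |t₁ - t₂| - ε ≤ dist (α t₁) (α t₂) ∧ dist (α t₁) (α t₂) ≤ |t₁ - t₂|

end


section AuxLemmas

open Filter Topology Metric Set

variable {X : Type*} [MetricSpace X]

lemma gromovProd_nonneg (p x y : X) : 0 ≤ gromovProd p x y := by
  have h := dist_triangle x p y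
  rw [dist_comm x p] at h
  unfold gromovProd; linarith

lemma dist_ray_zero {γ : ℝ → X} (hray : IsGeodesicRay γ) {t : ℝ} (ht : 0 ≤ t) :
    dist (γ 0) (γ t) = t := by
  rw [hray 0 t le_rfl ht, abs_of_nonpos (by linarith)]; ring

lemma ray_liminf {γ : ℝ → X} (hray : IsGeodesicRay γ) {s : ℝ} (hs : 0 ≤ s) :
    Filter.liminf (fun t : ℝ => gromovProd (γ 0) (γ s) (γ t)) Filter.atTop = s := by
  have hev : ∀ᶠ t : ℝ in atTop, gromovProd (γ 0) (γ s) (γ t) = s := by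
    filter_upwards [eventually_ge_atTop s] with t ht
    have ht0 : 0 ≤ t := hs.trans ht
    have h1 : dist (γ 0) (γ s) = s := dist_ray_zero hray hs
    have h2 : dist (γ 0) (γ t) = t := dist_ray_zero hray ht0
    have h3 : dist (γ s) (γ t) = t - s := by
      rw [hray s t hs ht0, abs_of_nonpos (by linarith)]; ring
    unfold gromovProd; rw [h1, h2, h3]; ring
  rw [liminf_congr hev, liminf_const]

lemma liminf_map_eq {α β : Type*} (u : β → EReal) (m : α → β) (f : Filter α) :
    Filter.liminf u (Filter.map m f) = Filter.liminf (fun a => u (m a)) f := by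
  simp only [Filter.liminf_eq, Filter.eventually_map]

end AuxLemmas

/-- **Lemma (image of a geodesic ray at a BRFP is a quasi-geodesic).**
Let `X` be a proper geodesic `δ`-hyperbolic metric space, `f : X → X` non-expanding,
`η = [γ]` a BRFP of `f`, and `γ` a geodesic ray with endpoint `η`. Then there exists
`T ≥ 0` such that `f ∘ γ` restricted to `[T, +∞)` is a `(1, 4δ+2)`-quasi-geodesic with
endpoint `η`. -/
theorem image_ray_is_quasigeodesic
    {X : Type*} [MetricSpace X] [ProperSpace X]
    (hgeo : IsGeodesicSpace X) (δ : ℝ) (hδ : 0 ≤ δ) (hhyp : IsDeltaHyperbolic X δ)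
    (f : X → X) (hf : Nonexpanding f)
    (γ : ℝ → X) (hη : IsBRFP f γ) :
    ∃ T : ℝ, 0 ≤ T ∧
      (∀ s t : ℝ, T ≤ s → T ≤ t →
        |s - t| - (4 * δ + 2) ≤ dist (f (γ s)) (f (γ t)) ∧
          dist (f (γ s)) (f (γ t)) ≤ |s - t| + (4 * δ + 2)) ∧
      Filter.Tendsto (fun t : ℝ => f (γ t)) Filter.atTop (gromovFilter γ) := by
  obtain ⟨hray, hfin, hlim⟩ := hη
  -- notation
  set S : ℝ → Set X := fun M =>
    {x | M ≤ Filter.liminf (fun t : ℝ => gromovProd (γ 0) x (γ t)) Filter.atTop} with hSdef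
  have hGF : gromovFilter γ = ⨅ M : ℝ, Filter.principal (S M) := rfl
  have hSmem : ∀ M : ℝ, S M ∈ gromovFilter γ := fun M => by
    rw [hGF]; exact Filter.mem_iInf_of_mem M (Filter.mem_principal_self _)
  set u : X → EReal := fun x => ((dist x (γ 0) - dist (f x) (γ 0) : ℝ) : EReal) with hudef
  have hlogu : logDilation (γ 0) γ f = Filter.liminf u (gromovFilter γ) := rfl
  -- the dilation is a finite real number L
  have hptwise : ∀ x : X, ((-(dist (f (γ 0)) (γ 0)) : ℝ) : EReal) ≤ u x := by
    intro x
    rw [hudef]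
    rw [EReal.coe_le_coe_iff]
    have h1 : dist (f x) (γ 0) ≤ dist (f x) (f (γ 0)) + dist (f (γ 0)) (γ 0) :=
      dist_triangle _ _ _
    have h2 : dist (f x) (f (γ 0)) ≤ dist x (γ 0) := hf _ _
    linarith
  have hbot : logDilation (γ 0) γ f ≠ ⊥ := by
    intro hb
    have hle : ((-(dist (f (γ 0)) (γ 0)) : ℝ) : EReal) ≤ logDilation (γ 0) γ f := by
      rw [hlogu]
      exact Filter.le_liminf_of_le (by isBoundedDefault)
        (Filter.Eventually.of_forall hptwise)
    rw [hb] at hle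
    exact absurd hle (by simp)
  set L : ℝ := (logDilation (γ 0) γ f).toReal with hLdef
  have hL : logDilation (γ 0) γ f = (L : EReal) := (EReal.coe_toReal hfin hbot).symm
  -- the ray tends to its own boundary point
  have hray_tendsto : Filter.Tendsto γ Filter.atTop (gromovFilter γ) := by
    rw [hGF, Filter.tendsto_iInf]
    intro M
    rw [Filter.tendsto_principal]
    filter_upwards [Filter.eventually_ge_atTop (max M 0)] with t ht
    have ht0 : 0 ≤ t := le_trans (le_max_right _ _) ht
    show M ≤ _
    rw [ray_liminf hray ht0]
    exact le_trans (le_max_left _ _) ht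
  -- upper bound : eventually dist (γ 0) (f (γ t)) < t - L + 1
  have hupper : ∀ᶠ t : ℝ in Filter.atTop, dist (γ 0) (f (γ t)) < t - L + 1 := by
    have h1 : (L : EReal) ≤ Filter.liminf (fun t : ℝ => u (γ t)) Filter.atTop := by
      calc (L : EReal) = Filter.liminf u (gromovFilter γ) := by rw [← hlogu, hL]
        _ ≤ Filter.liminf u (Filter.map γ Filter.atTop) :=
            Filter.liminf_le_liminf_of_le hray_tendsto
        _ = Filter.liminf (fun t : ℝ => u (γ t)) Filter.atTop := liminf_map_eq u γ _
    have h2 : ((L - 1 : ℝ) : EReal) < Filter.liminf (fun t : ℝ => u (γ t)) Filter.atTop :=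
      lt_of_lt_of_le (by exact_mod_cast (by linarith : (L - 1 : ℝ) < L)) h1
    have h3 := Filter.eventually_lt_of_lt_liminf h2
    filter_upwards [h3, Filter.eventually_ge_atTop (0 : ℝ)] with t hlt ht0
    rw [hudef] at hlt
    rw [EReal.coe_lt_coe_iff] at hlt
    have hd : dist (γ t) (γ 0) = t := by rw [dist_comm]; exact dist_ray_zero hray ht0
    rw [hd] at hlt
    rw [dist_comm]
    linarith
  -- lower bound : for all t ≥ 0, dist (γ 0) (f (γ t)) ≥ t - L - 2δ - 1
  have hlower : ∀ t : ℝ, 0 ≤ t → t - L - 2 * δ - 1 ≤ dist (γ 0) (f (γ t)) := by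
    intro t ht0
    obtain ⟨x, hxS, hxu⟩ :
        ∃ x : X, x ∈ S (t + δ + 1) ∧ dist x (γ 0) - dist (f x) (γ 0) ≤ L + 1 := by
      by_contra hcon
      push_neg at hcon
      have hev : ∀ᶠ x in gromovFilter γ, ((L + 1 : ℝ) : EReal) ≤ u x := by
        filter_upwards [hSmem (t + δ + 1)] with x hx
        rw [hudef, EReal.coe_le_coe_iff]
        exact le_of_lt (hcon x hx)
      have hge : ((L + 1 : ℝ) : EReal) ≤ logDilation (γ 0) γ f := by
        rw [hlogu]
        exact Filter.le_liminf_of_le (by isBoundedDefault) hev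
      rw [hL, EReal.coe_le_coe_iff] at hge
      linarith
    -- pick a far point on the ray with large Gromov product with x
    have hbdd : Filter.IsBoundedUnder (· ≥ ·) (Filter.atTop : Filter ℝ)
        (fun m : ℝ => gromovProd (γ 0) x (γ m)) :=
      ⟨0, Filter.eventually_map.mpr (Filter.Eventually.of_forall
        (fun m => gromovProd_nonneg _ _ _))⟩
    have hfr : ∀ᶠ m : ℝ in Filter.atTop, t + δ + 1 / 2 < gromovProd (γ 0) x (γ m) := by
      refine Filter.eventually_lt_of_lt_liminf ?_ hbdd
      exact lt_of_lt_of_le (by linarith) hxS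
    obtain ⟨m, hm1, hm2⟩ := (hfr.and (Filter.eventually_ge_atTop (max t 0))).exists
    have hm0 : 0 ≤ m := le_trans (le_max_right _ _) hm2
    have hmt : t ≤ m := le_trans (le_max_left _ _) hm2
    -- geodesic triangle (γ 0), x, γ m
    obtain ⟨α, hα⟩ := hgeo (γ 0) x
    obtain ⟨β, hβ⟩ := hgeo x (γ m)
    have hdpm : dist (γ 0) (γ m) = m := dist_ray_zero hray hm0
    have hγg : IsGeodesicFromTo γ (γ 0) (γ m) := by
      refine ⟨rfl, by rw [hdpm], ?_⟩
      intro a b ha hb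
      rw [hdpm] at ha hb
      exact hray a b ha.1 hb.1
    obtain ⟨w, hw, hwd⟩ := hhyp (γ 0) x (γ m) α β γ hα hβ hγg t
      ⟨ht0, by rw [hdpm]; exact hmt⟩
    have hpt : dist (γ 0) (γ t) = t := dist_ray_zero hray ht0
    have hxt : dist x (γ t) ≤ dist (γ 0) x - t + 2 * δ := by
      rcases hw with ⟨c, hc, rfl⟩ | ⟨c, hc, rfl⟩
      · -- w on the side from γ 0 to x
        obtain ⟨hα0, hαD, hαiso⟩ := hα
        have h1 : dist (α 0) (α c) = c := by
          rw [hαiso 0 c ⟨le_rfl, dist_nonneg⟩ hc, abs_of_nonpos (by linarith [hc.1])]; ring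
        have h2 : dist (α c) x = dist (γ 0) x - c := by
          have h := hαiso c (dist (γ 0) x) hc ⟨dist_nonneg, le_rfl⟩
          rw [hαD] at h
          rw [h, abs_of_nonpos (by linarith [hc.2])]; ring
        have h3 : t - δ ≤ c := by
          have htr : dist (γ 0) (γ t) ≤ dist (γ 0) (α c) + dist (γ t) (α c) := by
            rw [dist_comm (γ t) (α c)]; exact dist_triangle _ _ _
          rw [hα0] at h1
          rw [hpt] at htr
          linarith [h1 ▸ htr, hwd]
        calc dist x (γ t) ≤ dist x (α c) + dist (α c) (γ t) := dist_triangle _ _ _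
          _ ≤ (dist (γ 0) x - c) + δ := by
              rw [dist_comm x (α c), dist_comm (α c) (γ t)]
              rw [h2]
              linarith [hwd]
          _ ≤ dist (γ 0) x - t + 2 * δ := by linarith
      · -- w on the side from x to γ m : impossible
        exfalso
        obtain ⟨hβ0, hβD, hβiso⟩ := hβ
        have h1 : dist x (β c) = c := by
          have h := hβiso 0 c ⟨le_rfl, dist_nonneg⟩ hc
          rw [hβ0] at h
          rw [h, abs_of_nonpos (by linarith [hc.1])]; ring
        have h2 : dist (β c) (γ m) = dist x (γ m) - c := by
          have h := hβiso c (dist x (γ m)) hc ⟨dist_nonneg, le_rfl⟩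
          rw [hβD] at h
          rw [h, abs_of_nonpos (by linarith [hc.2])]; ring
        have h3 : dist (γ 0) (β c) ≤ t + δ := by
          have htr := dist_triangle (γ 0) (γ t) (β c)
          rw [hpt] at htr
          linarith [hwd]
        have h4 : dist (γ 0) x ≤ dist (γ 0) (β c) + c := by
          have htr := dist_triangle (γ 0) (β c) x
          rw [dist_comm (β c) x] at htr
          linarith [h1]
        have h5 : m ≤ dist (γ 0) (β c) + (dist x (γ m) - c) := by
          have htr := dist_triangle (γ 0) (β c) (γ m)
          rw [hdpm] at htr
          linarith [h2]
        have hgp : gromovProd (γ 0) x (γ m)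
            = (dist (γ 0) x + m - dist x (γ m)) / 2 := by
          unfold gromovProd; rw [hdpm]
        rw [hgp] at hm1
        linarith
    -- conclude with nonexpansiveness
    have h6 : dist (f x) (f (γ t)) ≤ dist x (γ t) := hf _ _
    have h7 : dist (f x) (γ 0) ≤ dist (f x) (f (γ t)) + dist (f (γ t)) (γ 0) :=
      dist_triangle _ _ _
    have h8 : dist x (γ 0) = dist (γ 0) x := dist_comm _ _
    have h9 : dist (γ 0) (f (γ t)) = dist (f (γ t)) (γ 0) := dist_comm _ _
    linarith
  -- choose T
  obtain ⟨T₁, hT₁⟩ := Filter.eventually_atTop.mp hupper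
  refine ⟨max T₁ 0, le_max_right _ _, ?_, ?_⟩
  · intro s t hs ht
    have hs0 : 0 ≤ s := le_trans (le_max_right _ _) hs
    have ht0 : 0 ≤ t := le_trans (le_max_right _ _) ht
    have hsT : T₁ ≤ s := le_trans (le_max_left _ _) hs
    have htT : T₁ ≤ t := le_trans (le_max_left _ _) ht
    constructor
    · rcases le_total s t with h | h
      · have h1 := hlower t ht0
        have h2 := hT₁ s hsT
        have h3 := dist_triangle (γ 0) (f (γ s)) (f (γ t))
        have habs : |s - t| = t - s := by
          rw [abs_sub_comm, abs_of_nonneg (by linarith)]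
        linarith
      · have h1 := hlower s hs0
        have h2 := hT₁ t htT
        have h3 := dist_triangle (γ 0) (f (γ t)) (f (γ s))
        have habs : |s - t| = s - t := abs_of_nonneg (by linarith)
        have hcomm : dist (f (γ s)) (f (γ t)) = dist (f (γ t)) (f (γ s)) := dist_comm _ _
        linarith
    · have h1 := hf (γ s) (γ t)
      rw [hray s t hs0 ht0] at h1
      linarith [abs_nonneg (s - t)]
  · -- convergence of f ∘ γ to the boundary point
    by_contra hnc
    rw [hGF, Filter.tendsto_iInf] at hnc
    push_neg at hnc
    obtain ⟨M, hM⟩ := hnc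
    rw [Filter.tendsto_principal, Filter.not_eventually] at hM
    have hch : ∀ n : ℕ, ∃ r : ℝ, (n : ℝ) ≤ r ∧ f (γ r) ∉ S M := by
      intro n
      obtain ⟨r, hr1, hr2⟩ := (Filter.frequently_atTop.mp hM) (n : ℝ)
      exact ⟨r, hr1, hr2⟩
    choose r hr1 hr2 using hch
    have hx_tendsto : Filter.Tendsto (fun n : ℕ => γ (r n)) Filter.atTop (gromovFilter γ) := by
      rw [hGF, Filter.tendsto_iInf]
      intro M'
      rw [Filter.tendsto_principal]
      have hev : ∀ᶠ n : ℕ in Filter.atTop, M' ≤ (n : ℝ) :=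
        Filter.Tendsto.eventually_ge_atTop tendsto_natCast_atTop_atTop M'
      filter_upwards [hev] with n hn
      have hrn0 : 0 ≤ r n := le_trans (Nat.cast_nonneg n) (hr1 n)
      show M' ≤ _
      rw [ray_liminf hray hrn0]
      linarith [hr1 n]
    have hreg : ∀ n : ℕ, InGeodesicRegion γ 1 (γ (r n)) := fun n =>
      ⟨r n, le_trans (Nat.cast_nonneg n) (hr1 n), by simp⟩
    have hT := hlim γ hray ⟨0, fun t _ => by simp⟩ 1 one_pos (fun n => γ (r n)) hreg hx_tendsto
    have hev : ∀ᶠ n : ℕ in Filter.atTop, f (γ (r n)) ∈ S M := by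
      have hle : gromovFilter γ ≤ Filter.principal (S M) := by
        rw [hGF]; exact iInf_le _ M
      exact Filter.tendsto_principal.mp (hT.mono_right hle)
    obtain ⟨n, hn⟩ := hev.exists
    exact hr2 n hn
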